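/- arXiv:1908.11402 — 3 statements merged into one kernel-verified Lean document; each statement's English description precedes it below -/
import Mathlib

section
/- Let s be a nonempty binary string and let w = code(s). For every odd index k with 1 ≤ k < |w|, the substring w[k]w[k+1] equals "01" if and only if k+1 = |w|, i.e., the delimiter "01" at an odd position appears exactly at the end of the codeword. -/
/-- `code` duplicates each bit of `s` and appends the delimiter "01". -/
def code (s : List Bool) : List Bool := (s.flatMap fun b => [b, b]) ++ [false, true]

lemma dup_len (s : List Bool) : (s.flatMap fun b => [b, b]).length = 2 * s.length := by
  induction s with
  | nil => simp
  | cons b t ih => simp [List.flatMap_cons, ih]; ring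

lemma dup_get (s : List Bool) : ∀ i, i < s.length →
    (s.flatMap fun b => [b, b])[2 * i]? = s[i]? ∧
    (s.flatMap fun b => [b, b])[2 * i + 1]? = s[i]? := by
  induction s with
  | nil => simp
  | cons b t ih =>
    intro i hi
    cases i with
    | zero => simp [List.flatMap_cons]
    | succ j =>
      have h := ih j (by simpa using hi)
      have h2 : 2 * (j + 1) = 2 * j + 1 + 1 := by ring
      rw [h2]
      simp only [List.flatMap_cons, List.cons_append, List.getElem?_cons_succ]
      simpa using h

/-- for a nonempty binary string `s` and `w = code s`, for every odd
(1-indexed) position `k` with `1 ≤ k < |w|`, the pair `w[k]w[k+1]` equals "01" iff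
`k + 1 = |w|` (i.e. the delimiter at an odd position appears exactly at the end).
Here `w[k-1]?` (0-indexed) is the character at 1-indexed position `k`. -/
theorem code_delimiter_only_at_end (s : List Bool) (hs : s ≠ []) (w : List Bool)
    (hw : w = code s) :
    ∀ k : ℕ, Odd k → 1 ≤ k → k < w.length →
      ((w[k - 1]? = some false ∧ w[k]? = some true) ↔ k + 1 = w.length) := by
  subst hw
  intro k hodd h1 hlt
  obtain ⟨i, hi⟩ := hodd
  have hd := dup_len s
  have hlen : (code s).length = 2 * s.length + 2 := by
    simp only [code, List.length_append]; rw [hd]; rfl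
  have hk1 : k - 1 = 2 * i := by omega
  have hk : k = 2 * i + 1 := by omega
  have hile : i ≤ s.length := by omega
  rw [hk1, hk, hlen]
  rcases lt_or_eq_of_le hile with hilt | hieq
  · -- inside duplicated part: pair is equal characters
    obtain ⟨hg1, hg2⟩ := dup_get s i hilt
    have e1 : (code s)[2 * i]? = s[i]? := by
      rw [code, List.getElem?_append_left (by rw [hd]; omega)]; exact hg1
    have e2 : (code s)[2 * i + 1]? = s[i]? := by
      rw [code, List.getElem?_append_left (by rw [hd]; omega)]; exact hg2
    rw [e1, e2]
    have hv : i < s.length := hilt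
    constructor
    · rintro ⟨hf, ht⟩
      rw [hf] at ht
      simp at ht
    · intro h; omega
  · -- at the end
    have e1 : (code s)[2 * i]? = some false := by
      rw [code, List.getElem?_append_right (by rw [hd]; omega), hd]
      have : 2 * i - 2 * s.length = 0 := by omega
      rw [this]; rfl
    have e2 : (code s)[2 * i + 1]? = some true := by
      rw [code, List.getElem?_append_right (by rw [hd]; omega), hd]
      have : 2 * i + 1 - 2 * s.length = 1 := by omega
      rw [this]; rfl
    rw [e1, e2]
    simp
    omega
end

section
/- Consider the function Communicate modeled abstractly: given k agents each holding a pair (sᵢ, boolᵢ) with sᵢ a codeword and a common bound i, let Ḡ be the set of indices j with bool_j = true and |s_j| ≤ i. If Ḡ is nonempty with σ the lexicographically smallest s_j over j ∈ Ḡ, then the output string l = σ ++ 1^{i−|σ|} determines σ uniquely: the position of the first occurrence of "01" at an odd index in l recovers σ and hence decode(σ). -/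
lemma dup_length (x : List Bool) : (x.flatMap fun c => [c, c]).length = 2 * x.length := by
  induction x with
  | nil => simp
  | cons a t ih => simp [ih]; ring

lemma dup_pair (x : List Bool) (m : ℕ) (h : m < x.length) :
    ((x.flatMap fun c => [c, c])[2*m]? = some x[m]) ∧
    ((x.flatMap fun c => [c, c])[2*m+1]? = some x[m]) := by
  induction x generalizing m with
  | nil => simp at h
  | cons a t ih =>
    cases m with
    | zero => simp
    | succ m =>
      have h' : m < t.length := by simpa using Nat.lt_of_succ_lt_succ h
      have := ih m h'
      have e1 : 2*(m+1) = (2*m) + 1 + 1 := by ring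
      rw [e1]
      simpa using this

/-- abstract model of `Communicate`. `k` agents hold pairs
`(s j, b j)` where each `s j` is a codeword, with a common bound `n`.
`Ḡ` is the set of indices `j` with `b j = true` and `|s j| ≤ n`; it is nonempty
(witnessed by `j₀`) and `σ = s j₀` is the lexicographically smallest `s j` over
`j ∈ Ḡ`. Then in the output `l = σ ++ 1^(n−|σ|)` there is a unique odd (1-indexed)
position `z` at which the pair `l[z]l[z+1]` is "01", and for any such `z` the prefix
`l[1..z+1]` recovers `σ`. -/
theorem communicate_output_recovers_sigma (k n : ℕ) (s : Fin k → List Bool)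
    (b : Fin k → Bool)
    (hcode : ∀ j, ∃ x : List Bool, s j = code x)
    (j₀ : Fin k) (hb₀ : b j₀ = true) (hlen₀ : (s j₀).length ≤ n)
    (σ : List Bool) (hσ : σ = s j₀)
    (hmin : ∀ j, b j = true → (s j).length ≤ n → ¬ List.Lex (· < ·) (s j) σ)
    (l : List Bool) (hl : l = σ ++ List.replicate (n - σ.length) true) :
    (∃! z : ℕ, Odd z ∧ z < l.length ∧ l[z - 1]? = some false ∧ l[z]? = some true) ∧
      ∀ z : ℕ, Odd z → z < l.length → l[z - 1]? = some false → l[z]? = some true →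
        l.take (z + 1) = σ := by
  obtain ⟨x, hx⟩ := hcode j₀
  have hσx : σ = code x := by rw [hσ, hx]
  set r := n - σ.length with hr
  set D := x.flatMap fun c => [c, c] with hD
  have hDlen : D.length = 2 * x.length := dup_length x
  have hσlen : σ.length = 2 * x.length + 2 := by
    rw [hσx]; simp [code, ← hD, hDlen]
  have hlform : l = D ++ ([false, true] ++ List.replicate r true) := by
    rw [hl, hσx]; simp [code, ← hD]
  have hllen : l.length = 2 * x.length + 2 + r := by
    rw [hl]; simp [hσlen]
  -- values at the delimiter
  have hfalse : l[2 * x.length]? = some false := by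
    rw [hlform, List.getElem?_append_right (by omega)]
    simp [hDlen]
  have htrue : l[2 * x.length + 1]? = some true := by
    rw [hlform, List.getElem?_append_right (by omega)]
    have : 2 * x.length + 1 - D.length = 1 := by omega
    simp [this]
  have htake : l.take (2 * x.length + 1 + 1) = σ := by
    rw [hl, ← hσlen]
    simpa using List.take_left σ (List.replicate r true)
  have huniq : ∀ z : ℕ, Odd z → z < l.length → l[z - 1]? = some false →
      l[z]? = some true → z = 2 * x.length + 1 := by
    rintro z ⟨m, hm⟩ hzl h0 h1
    subst hm
    have hz1 : 2 * m + 1 - 1 = 2 * m := by omega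
    rw [hz1] at h0
    rcases lt_trichotomy m x.length with hc | hc | hc
    · exfalso
      have hp := dup_pair x m hc
      have e0 : l[2 * m]? = some x[m] := by
        rw [hlform, List.getElem?_append_left (by omega)]; exact hp.1
      have e1 : l[2 * m + 1]? = some x[m] := by
        rw [hlform, List.getElem?_append_left (by omega)]; exact hp.2
      rw [e0] at h0; rw [e1] at h1
      simp at h0 h1
      rw [h0] at h1; exact Bool.false_ne_true h1
    · omega
    · exfalso
      have : l[2 * m]? = (List.replicate r true)[2 * m - D.length - 2]? := by
        rw [hlform, List.getElem?_append_right (by omega),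
          List.getElem?_append_right (by simp; omega)]
        simp
      rw [this] at h0
      rcases lt_or_ge (2 * m - D.length - 2) r with h | h
      · rw [List.getElem?_replicate, if_pos h] at h0; simp at h0
      · rw [List.getElem?_eq_none (by simpa using h)] at h0; simp at h0
  constructor
  · exact ⟨2 * x.length + 1, ⟨⟨x.length, by ring⟩, by omega, by simpa using hfalse, htrue⟩,
      fun z hz => huniq z hz.1 hz.2.1 hz.2.2.1 hz.2.2.2⟩
  · intro z hz hzl h0 h1
    rw [huniq z hz hzl h0 h1]
    exact htake
end

section
/- Let w = σ ++ 1^{i−|σ|} where σ is a codeword (image of a nonempty binary string under code) with |σ| ≤ i. Then there exists an odd z < |w| with w[z]w[z+1] = "01" if and only if |σ| ≤ i, and the smallest such z satisfies z + 1 = |σ|; moreover if σ' ≠ σ is another codeword with |σ'| ≤ i then σ' ++ 1^{i−|σ'|} ≠ σ ++ 1^{i−|σ|}. -/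
lemma flat_len (x : List Bool) : (x.flatMap fun b => [b, b]).length = 2 * x.length := by
  induction x with
  | nil => simp
  | cons b t ih =>
    simp only [List.flatMap_cons, List.length_append, List.length_cons, List.length_nil, ih]
    ring

lemma code_len (x : List Bool) : (code x).length = 2 * x.length + 2 := by
  simp only [code, List.length_append, flat_len, List.length_cons, List.length_nil]

lemma flat_dup (x : List Bool) (k : ℕ) :
    (x.flatMap fun b => [b, b])[2 * k]? = x[k]? ∧
    (x.flatMap fun b => [b, b])[2 * k + 1]? = x[k]? := by
  induction x generalizing k with
  | nil => simp
  | cons b t ih =>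
    cases k with
    | zero => simp [List.flatMap_cons]
    | succ k =>
      have h1 : 2 * (k + 1) = (2 * k + 1) + 1 := by ring
      have h2 : 2 * (k + 1) + 1 = ((2 * k + 1) + 1) + 1 := by ring
      simp only [List.flatMap_cons, List.cons_append, List.nil_append, h1, h2,
        List.getElem?_cons_succ]
      exact ⟨(ih k).1, (ih k).2⟩

/-- In a padded codeword, the only even position carrying "01" is `2|x|`. -/
lemma lemA (x : List Bool) (m e : ℕ) (he : Even e)
    (h1 : (code x ++ List.replicate m true)[e]? = some false)
    (h2 : (code x ++ List.replicate m true)[e + 1]? = some true) :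
    e = 2 * x.length := by
  by_contra hne
  rcases lt_or_gt_of_ne hne with hlt | hgt
  · -- e < 2|x| : both positions lie in the duplicated part, equal bits
    obtain ⟨k, hk⟩ := he
    have hk2 : e = 2 * k := by omega
    subst hk2
    have hklen : k < x.length := by omega
    have hw1 : (code x ++ List.replicate m true)[2 * k]? = x[k]? := by
      rw [List.getElem?_append, if_pos (by rw [code_len]; try omega), code,
        List.getElem?_append, if_pos (by rw [flat_len]; omega)]
      exact (flat_dup x k).1
    have hw2 : (code x ++ List.replicate m true)[2 * k + 1]? = x[k]? := by
      rw [List.getElem?_append, if_pos (by rw [code_len]; try omega), code,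
        List.getElem?_append, if_pos (by rw [flat_len]; omega)]
      exact (flat_dup x k).2
    rw [hw1] at h1
    rw [hw2] at h2
    rw [h1] at h2
    simp at h2
  · -- e > 2|x| : e even forces e ≥ |code x|, so w[e]? is `true` or `none`
    have hge : (code x).length ≤ e := by
      rw [code_len]
      obtain ⟨k, hk⟩ := he
      omega
    rw [List.getElem?_append_right hge, List.getElem?_replicate] at h1
    split at h1 <;> simp_all

/-- The delimiter "01" sits at positions `2|x|, 2|x|+1` of a padded codeword. -/
lemma delim (x : List Bool) (m : ℕ) :
    (code x ++ List.replicate m true)[2 * x.length]? = some false ∧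
    (code x ++ List.replicate m true)[2 * x.length + 1]? = some true := by
  constructor <;>
    rw [List.getElem?_append, if_pos (by rw [code_len]; try omega), code,
      List.getElem?_append_right (by rw [flat_len]; try omega)]
  · have h : 2 * x.length - (x.flatMap fun b => [b, b]).length = 0 := by
      rw [flat_len]; omega
    rw [h]; rfl
  · have h : 2 * x.length + 1 - (x.flatMap fun b => [b, b]).length = 1 := by
      rw [flat_len]; omega
    rw [h]; rfl

/-- let `w = σ ++ 1^(i−|σ|)` where `σ` is a codeword of a nonempty
binary string with `|σ| ≤ i`. Then there exists an odd (1-indexed) `z < |w|` with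
`w[z]w[z+1] = "01"` iff `|σ| ≤ i`, the smallest such `z` satisfies `z + 1 = |σ|`,
and padding preserves distinctness: if `σ' ≠ σ` is another codeword with `|σ'| ≤ i`
then `σ' ++ 1^(i−|σ'|) ≠ σ ++ 1^(i−|σ|)`. -/
theorem padded_codeword_properties (i : ℕ) (x : List Bool) (hx : x ≠ [])
    (σ : List Bool) (hσ : σ = code x) (hσi : σ.length ≤ i)
    (w : List Bool) (hw : w = σ ++ List.replicate (i - σ.length) true) :
    ((∃ z : ℕ, Odd z ∧ z < w.length ∧ w[z - 1]? = some false ∧ w[z]? = some true) ↔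
        σ.length ≤ i) ∧
      (∀ z : ℕ,
        IsLeast {z : ℕ | Odd z ∧ z < w.length ∧ w[z - 1]? = some false ∧
          w[z]? = some true} z → z + 1 = σ.length) ∧
      ∀ x' : List Bool, x' ≠ [] → ∀ σ' : List Bool, σ' = code x' → σ' ≠ σ →
        σ'.length ≤ i → σ' ++ List.replicate (i - σ'.length) true ≠ w := by
  subst hσ hw
  have hlen := code_len x
  have hxpos : 0 < x.length := List.length_pos_iff.mpr hx
  set m := i - (code x).length with hm
  have hwlen : (code x ++ List.replicate m true).length = i := by
    simp [List.length_replicate]; omega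
  obtain ⟨hf, ht⟩ := delim x m
  refine ⟨⟨fun _ => hσi, fun _ => ?_⟩, fun z hz => ?_, ?_⟩
  · refine ⟨2 * x.length + 1, ⟨x.length, by ring⟩, by omega, ?_, ht⟩
    have h : 2 * x.length + 1 - 1 = 2 * x.length := by omega
    rw [h]; exact hf
  · -- minimality: any element of the set already sits at the delimiter
    obtain ⟨⟨k, hk⟩, hzlt, h1, h2⟩ := hz.1
    have hz1 : z - 1 + 1 = z := by omega
    have heven : Even (z - 1) := ⟨k, by omega⟩
    have := lemA x m (z - 1) heven h1 (by rw [hz1]; exact h2)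
    omega
  · intro x' hx' σ' hσ' hne hσ'i heq
    subst hσ'
    have hlen' := code_len x'
    obtain ⟨hf', ht'⟩ := delim x' (i - (code x').length)
    rw [heq] at hf' ht'
    have hevene : Even (2 * x'.length) := ⟨x'.length, by ring⟩
    have hlx : 2 * x'.length = 2 * x.length := lemA x m _ hevene hf' ht'
    have hleq : (code x').length = (code x).length := by omega
    exact hne (List.append_inj heq hleq).1
end
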